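/- arXiv:1002.1432 — 4 statements merged into one kernel-verified Lean document; each statement's English description precedes it below -/
import Mathlib

section
/- Let F be a differential field of characteristic zero, let N be a no new constants extension of F, and let E and K be differential subfields of N with K ⊇ F. Suppose E = F(ζ₁,…,ζₙ) is an iterated antiderivative extension of F. Then the compositum KE = K(ζ₁,…,ζₙ) is an iterated antiderivative extension of K. Furthermore, if KE ≠ K, then the set {ζ₁,…,ζₙ} contains elements η₁,…,η_t which are iterated antiderivatives of K, are algebraically independent over K, and satisfy KE = K(η₁,…,η_t). -/
/-- A derivation on a field: an additive map satisfying the Leibniz rule. -/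
def IsDeriv {E : Type*} [Field E] (D : E → E) : Prop :=
  (∀ x y : E, D (x + y) = D x + D y) ∧ ∀ x y : E, D (x * y) = D x * y + x * D y

/-- A subfield closed under the derivation, i.e. a differential subfield. -/
def IsDiffSubfield {E : Type*} [Field E] (D : E → E) (K : Subfield E) : Prop :=
  ∀ x ∈ K, D x ∈ K

/-- The subfield generated by a subfield `F` together with a set `S`, i.e. `F(S)`. -/
def adjoinSF {E : Type*} [Field E] (F : Subfield E) (S : Set E) : Subfield E :=
  Subfield.closure (↑F ∪ S)

/-- `ζ 0, …, ζ (n-1)` are iterated antiderivatives of `F`: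
`(ζ i)' ∈ F(ζ 0, …, ζ (i-1))` for every `i`. -/
def IsIterAntideriv {E : Type*} [Field E] (D : E → E) (F : Subfield E) {n : ℕ}
    (ζ : Fin n → E) : Prop :=
  ∀ i, D (ζ i) ∈ adjoinSF F (ζ '' {j | j < i})

/-- `M` is a no new constants extension of `K`: the constants of `M` are exactly
the constants of `K`. -/
def NoNewConstants {E : Type*} [Field E] (D : E → E) (K M : Subfield E) : Prop :=
  K ≤ M ∧ ∀ x ∈ M, D x = 0 → x ∈ K

/-- `K` is an iterated antiderivative extension of `F`. -/
def IsIAE {E : Type*} [Field E] (D : E → E) (F K : Subfield E) : Prop :=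
  NoNewConstants D F K ∧
    ∃ (n : ℕ) (ζ : Fin n → E), IsIterAntideriv D F ζ ∧ K = adjoinSF F (Set.range ζ)

/-- `K` is an antiderivative extension of `F`. -/
def IsAE {E : Type*} [Field E] (D : E → E) (F K : Subfield E) : Prop :=
  NoNewConstants D F K ∧
    ∃ (n : ℕ) (ζ : Fin n → E), (∀ i, D (ζ i) ∈ (F : Set E)) ∧ K = adjoinSF F (Set.range ζ)

/-- A differential automorphism of `E` over `F`: a field automorphism fixing `F`
pointwise and commuting with the derivation. -/
def IsDiffAut {E : Type*} [Field E] (D : E → E) (F : Subfield E) (σ : E ≃+* E) : Prop :=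
  (∀ x ∈ F, σ x = x) ∧ ∀ y : E, σ (D y) = D (σ y)

/-- `M` is a minimal differential field extension of `K`. -/
def IsMinimalDiffExt {E : Type*} [Field E] (D : E → E) (K M : Subfield E) : Prop :=
  IsDiffSubfield D M ∧ K < M ∧
    ∀ L : Subfield E, IsDiffSubfield D L → K ≤ L → L ≤ M → L = K ∨ L = M

/-- The field of constants of a differential subfield `F`. -/
def constantsOf {E : Type*} [Field E] (D : E → E) (hD : IsDeriv D) (F : Subfield E) :
    Subfield E where
  carrier := {x : E | x ∈ F ∧ D x = 0}
  zero_mem' := by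
    refine ⟨F.zero_mem, ?_⟩
    have h := hD.1 0 0
    simp only [add_zero] at h
    exact left_eq_add.mp h
  one_mem' := by
    refine ⟨F.one_mem, ?_⟩
    have h := hD.2 1 1
    simp only [mul_one, one_mul] at h
    exact left_eq_add.mp h
  add_mem' := by
    rintro a b ⟨haF, ha⟩ ⟨hbF, hb⟩
    exact ⟨F.add_mem haF hbF, by rw [hD.1 a b, ha, hb, add_zero]⟩
  mul_mem' := by
    rintro a b ⟨haF, ha⟩ ⟨hbF, hb⟩
    exact ⟨F.mul_mem haF hbF, by rw [hD.2 a b, ha, hb, zero_mul, mul_zero, add_zero]⟩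
  neg_mem' := by
    rintro a ⟨haF, ha⟩
    refine ⟨F.neg_mem haF, ?_⟩
    have h0 : D 0 = 0 := by
      have h := hD.1 0 0
      simp only [add_zero] at h
      exact left_eq_add.mp h
    have h := hD.1 a (-a)
    rw [add_neg_cancel, h0, ha, zero_add] at h
    exact h.symm
  inv_mem' := by
    rintro a ⟨haF, ha⟩
    refine ⟨F.inv_mem haF, ?_⟩
    by_cases h0 : a = 0
    · subst h0; rw [inv_zero]; exact ha
    · have h1 : D 1 = 0 := by
        have h := hD.2 1 1
        simp only [mul_one, one_mul] at h
        exact left_eq_add.mp h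
      have h := hD.2 a a⁻¹
      rw [mul_inv_cancel₀ h0, h1, ha, zero_mul, zero_add] at h
      rcases mul_eq_zero.mp h.symm with h' | h'
      · exact absurd h' h0
      · exact h'

/-- The antiderivative closure of `L` in `E`: the subfield generated over `L`
by all antiderivatives of `L` lying in `E`. -/
def adCl {E : Type*} [Field E] (D : E → E) (L : Subfield E) : Subfield E :=
  adjoinSF L {x : E | D x ∈ L}

/-- The differential subfield generated by `F` and `u`, i.e. `F⟨u⟩ = F(u, u', u'', …)`. -/
def diffAdjoin {E : Type*} [Field E] (D : E → E) (F : Subfield E) (u : E) : Subfield E :=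
  sInf {M : Subfield E | IsDiffSubfield D M ∧ F ≤ M ∧ u ∈ M}

/-- The transcendence degree of `K` over `F` (both viewed inside an ambient field `E`):
the supremum of cardinalities of subsets of `K` that are algebraically independent
over `F`. -/
noncomputable def trdegSF {E : Type*} [Field E] (F K : Subfield E) : Cardinal :=
  ⨆ s : {s : Set E // s ⊆ (K : Set E) ∧ AlgebraicIndependent F ((↑) : s → E)},
    Cardinal.mk s.1

/-!
The compositum `K(ζ₁,…,ζₙ)` is generated over `K` by the same iterated antiderivatives, and it has
no new constants because `N` has none over `F ⊆ K`. For the refinement, scan `ζ₁,…,ζₙ` in order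
and keep `ζᵢ` exactly when it is transcendental over `L = K(ζ₁,…,ζᵢ₋₁)`. A discarded `ζᵢ` already
lies in `L`: `L` is a differential field containing all constants of `N`, `ζᵢ` is algebraic over
`L` with `ζᵢ′ ∈ L`, and differentiating the minimal polynomial `Xᵐ + aXᵐ⁻¹ + ⋯` of `ζᵢ` yields a
polynomial of smaller degree vanishing at `ζᵢ`; it is therefore zero, and its `Xᵐ⁻¹` coefficient
says that `a + mζᵢ` is a constant.
-/

open Polynomial Differential

theorem Differential.mem_range_of_deriv_mem_range_of_isAlgebraic {A B : Type*} [Field A]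
    [CharZero A] [CommRing B] [Algebra A B] [Differential A] [Differential B]
    [DifferentialAlgebra A B] [ContainConstants A B] {x : B}
    (hx : x′ ∈ (algebraMap A B).range) (halg : IsAlgebraic A x) :
    x ∈ (algebraMap A B).range := by
  nontriviality B
  obtain ⟨a, ha⟩ := hx
  have hint : IsIntegral A x := halg.isIntegral
  set p := minpoly A x
  set m := p.natDegree
  have hm : 0 < m := minpoly.natDegree_pos hint
  have hlead : p.coeff m = 1 := (minpoly.monic hint).coeff_natDegree
  set q := mapCoeffs p + C a * derivative p
  have hq : aeval x q = 0 := by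
    have := deriv_aeval_eq x p
    rw [minpoly.aeval, map_zero] at this
    simpa [q, ha, mul_comm] using this.symm
  have hqdeg : q.degree < p.degree := by
    rw [degree_eq_natDegree (minpoly.ne_zero hint), degree_lt_iff_coeff_zero]
    intro k hk
    have hk : m ≤ k := by exact_mod_cast hk
    have hk1 : p.coeff (k + 1) = 0 := coeff_eq_zero_of_natDegree_lt (by omega)
    rcases hk.eq_or_lt with rfl | hlt
    · simp [q, coeff_derivative, hk1, hlead]
    · simp [q, coeff_derivative, hk1, coeff_eq_zero_of_natDegree_lt hlt]
  have hq0 : q = 0 := by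
    by_contra hne
    exact (minpoly.degree_le_of_ne_zero A x hne hq).not_gt hqdeg
  have hcoeff : (p.coeff (m - 1))′ + a * m = 0 := by
    have := congrArg (coeff · (m - 1)) hq0
    simpa [q, coeff_derivative, Nat.sub_add_cancel hm, hlead, Nat.cast_pred hm] using this
  obtain ⟨c, hc⟩ := mem_range_of_deriv_eq_zero A
    (x := algebraMap A B (p.coeff (m - 1)) + m * x) (by
      have := congrArg (algebraMap A B) hcoeff
      simp only [map_add, map_mul, map_natCast, map_zero, ha] at this
      simp only [map_add, deriv_algebraMap, Derivation.leibniz, Derivation.map_natCast,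
        smul_eq_mul]
      linear_combination this)
  refine ⟨(m : A)⁻¹ * (c - p.coeff (m - 1)), ?_⟩
  have hm0 : (m : A) ≠ 0 := Nat.cast_ne_zero.2 hm.ne'
  rw [map_mul, map_sub, hc, add_sub_cancel_left, ← map_natCast (algebraMap A B) m, ← mul_assoc,
    ← map_mul, inv_mul_cancel₀ hm0, map_one, one_mul]

theorem AlgebraicIndependent.fin_snoc {R A : Type*} [CommRing R] [CommRing A] [Algebra R A]
    {n : ℕ} {x : Fin n → A} (hx : AlgebraicIndependent R x) {a : A}
    (ha : Transcendental (Algebra.adjoin R (Set.range x)) a) :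
    AlgebraicIndependent R (Fin.snoc x a : Fin (n + 1) → A) := by
  convert ((hx.option_iff_transcendental a).2 ha).comp _ finSuccEquivLast.injective
  ext i
  cases i using Fin.lastCases <;> simp

theorem Fin.Iio_last_eq_range_castSucc (n : ℕ) :
    Set.Iio (Fin.last n) = Set.range Fin.castSucc := by
  ext j
  cases j using Fin.lastCases <;> simp

theorem Derivation.isDiffSubfield_closure {N : Type*} [Field N] (d : Derivation ℤ N N)
    {S : Set N} (hS : ∀ s ∈ S, d s ∈ Subfield.closure S) :
    IsDiffSubfield d (Subfield.closure S) := by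
  intro x hx
  induction hx using Subfield.closure_induction with
  | mem s hs => exact hS s hs
  | one => rw [d.map_one_eq_zero]; exact zero_mem _
  | add a b _ _ ha hb => rw [map_add]; exact add_mem ha hb
  | neg a _ ha => rw [map_neg]; exact neg_mem ha
  | inv a h ha =>
    rw [d.leibniz_inv, smul_eq_mul]
    exact mul_mem (neg_mem (pow_mem (inv_mem h) 2)) ha
  | mul a b h₁ h₂ ha hb =>
    rw [d.leibniz, smul_eq_mul, smul_eq_mul]
    exact add_mem (mul_mem h₁ hb) (mul_mem h₂ ha)

section Adjoin

variable {N : Type*} [Field N]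

theorem adjoinSF_eq_sup (K : Subfield N) (S : Set N) : adjoinSF K S = K ⊔ Subfield.closure S := by
  rw [adjoinSF, Subfield.closure_union, Subfield.closure_eq]

theorem le_adjoinSF (K : Subfield N) (S : Set N) : K ≤ adjoinSF K S :=
  (adjoinSF_eq_sup K S).symm ▸ le_sup_left

theorem adjoinSF_mono {K K' : Subfield N} {S S' : Set N} (hK : K ≤ K') (hS : S ⊆ S') :
    adjoinSF K S ≤ adjoinSF K' S' :=
  Subfield.closure_mono (Set.union_subset_union hK hS)

theorem adjoinSF_insert (K : Subfield N) (S : Set N) (x : N) :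
    adjoinSF K (insert x S) = adjoinSF (adjoinSF K S) {x} := by
  simp only [adjoinSF_eq_sup, Set.insert_eq, Subfield.closure_union]
  ac_rfl

theorem adjoinSF_singleton_of_mem {K : Subfield N} {x : N} (hx : x ∈ K) : adjoinSF K {x} = K := by
  rw [adjoinSF_eq_sup, sup_eq_left, Subfield.closure_le, Set.singleton_subset_iff]
  exact hx

theorem adjoinSF_eq_toSubfield_adjoin (K : Subfield N) (S : Set N) :
    adjoinSF K S = (IntermediateField.adjoin K S).toSubfield := by
  rw [IntermediateField.adjoin_toSubfield, adjoinSF,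
    show Set.range (algebraMap K N) = K from Subtype.range_coe]

end Adjoin

namespace IsDeriv

variable {N : Type*} [Field N] {D : N → N}

def toDerivation (hD : IsDeriv D) : Derivation ℤ N N :=
  .mk' (AddMonoidHom.mk' D hD.1).toIntLinearMap fun a b => by
    simp only [AddMonoidHom.coe_toIntLinearMap, AddMonoidHom.mk'_apply, hD.2, smul_eq_mul]
    ring

def restrict (hD : IsDeriv D) {K : Subfield N} (hK : IsDiffSubfield D K) : Derivation ℤ K K :=
  .mk' (AddMonoidHom.mk' (fun x : K => ⟨D x, hK x x.2⟩)
      fun x y => Subtype.ext (hD.1 x y)).toIntLinearMap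
    fun a b => Subtype.ext (by simp [hD.2, smul_eq_mul]; ring)

@[simp]
theorem coe_restrict_apply (hD : IsDeriv D) {K : Subfield N} (hK : IsDiffSubfield D K) (x : K) :
    (hD.restrict hK x : N) = D x := rfl

theorem isDiffSubfield_adjoinSF (hD : IsDeriv D) {K : Subfield N} (hK : IsDiffSubfield D K)
    {S : Set N} (hS : ∀ s ∈ S, D s ∈ adjoinSF K S) : IsDiffSubfield D (adjoinSF K S) :=
  hD.toDerivation.isDiffSubfield_closure fun s hs =>
    hs.elim (fun hsK => le_adjoinSF K S (hK s hsK)) (hS s)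

theorem mem_of_deriv_mem_of_isAlgebraic [CharZero N] (hD : IsDeriv D) {L : Subfield N}
    (hL : IsDiffSubfield D L) (hC : ∀ x, D x = 0 → x ∈ L) {x : N} (hx : D x ∈ L)
    (halg : IsAlgebraic L x) : x ∈ L := by
  let : Differential N := ⟨hD.toDerivation⟩
  let : Differential L := ⟨hD.restrict hL⟩
  have : DifferentialAlgebra L N := ⟨fun y => (coe_restrict_apply hD hL y).symm⟩
  have : ContainConstants L N := ⟨fun {y} hy => ⟨⟨y, hC y hy⟩, rfl⟩⟩
  obtain ⟨y, rfl⟩ := mem_range_of_deriv_mem_range_of_isAlgebraic ⟨⟨D x, hx⟩, rfl⟩ halg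
  exact y.2

end IsDeriv

section IterAntideriv

variable {N : Type*} [Field N] {D : N → N} {K : Subfield N}

theorem IsIterAntideriv.mono {K' : Subfield N} (hKK' : K ≤ K') {n : ℕ} {ζ : Fin n → N}
    (h : IsIterAntideriv D K ζ) : IsIterAntideriv D K' ζ :=
  fun i => adjoinSF_mono hKK' subset_rfl (h i)

theorem isIterAntideriv_snoc_iff {n : ℕ} {ζ : Fin n → N} {x : N} :
    IsIterAntideriv D K (Fin.snoc ζ x : Fin (n + 1) → N) ↔
      IsIterAntideriv D K ζ ∧ D x ∈ adjoinSF K (Set.range ζ) := by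
  have hcast (i : Fin n) :
      (Fin.snoc ζ x : Fin (n + 1) → N) '' Set.Iio i.castSucc = ζ '' Set.Iio i := by
    rw [← Fin.image_castSucc_Iio, Set.image_image]
    simp
  have hlast : (Fin.snoc ζ x : Fin (n + 1) → N) '' Set.Iio (Fin.last n) = Set.range ζ := by
    rw [Fin.Iio_last_eq_range_castSucc, ← Set.range_comp]
    simp
  simp only [IsIterAntideriv, Fin.forall_fin_succ', Set.Iio_def, hcast, hlast, Fin.snoc_castSucc,
    Fin.snoc_last]

theorem IsIterAntideriv.isDiffSubfield_adjoinSF (hD : IsDeriv D) (hK : IsDiffSubfield D K)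
    {n : ℕ} {ζ : Fin n → N} (h : IsIterAntideriv D K ζ) :
    IsDiffSubfield D (adjoinSF K (Set.range ζ)) :=
  hD.isDiffSubfield_adjoinSF hK <| by
    rintro _ ⟨i, rfl⟩
    exact adjoinSF_mono le_rfl (Set.image_subset_range _ _) (h i)

theorem IsIterAntideriv.exists_algebraicIndependent_subfamily [CharZero N] (hD : IsDeriv D)
    (hK : IsDiffSubfield D K) (hC : ∀ x, D x = 0 → x ∈ K) {n : ℕ} {ζ : Fin n → N}
    (hζ : IsIterAntideriv D K ζ) :
    ∃ (t : ℕ) (η : Fin t → N), (∀ i, ∃ j, η i = ζ j) ∧ IsIterAntideriv D K η ∧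
      AlgebraicIndependent K η ∧ adjoinSF K (Set.range η) = adjoinSF K (Set.range ζ) := by
  induction n with
  | zero => exact ⟨0, ζ, fun i => ⟨i, rfl⟩, hζ, algebraicIndependent_empty_type, rfl⟩
  | succ n ih =>
    obtain ⟨ζ₀, x, rfl⟩ : ∃ ζ₀ x, ζ = Fin.snoc ζ₀ x :=
      ⟨Fin.init ζ, ζ (Fin.last n), (Fin.snoc_init_self ζ).symm⟩
    obtain ⟨hζ₀, hx⟩ := isIterAntideriv_snoc_iff.1 hζ
    obtain ⟨t, η, hsel, hη, hind, heq⟩ := ih hζ₀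
    set L := adjoinSF K (Set.range η)
    rw [← heq] at hx
    have hgen : adjoinSF K (Set.range (Fin.snoc ζ₀ x)) = adjoinSF L {x} := by
      rw [Fin.range_snoc, adjoinSF_insert, heq]
    have hsel' (i : Fin t) : ∃ j, η i = (Fin.snoc ζ₀ x : Fin (n + 1) → N) j := by
      obtain ⟨j, hj⟩ := hsel i
      exact ⟨j.castSucc, by simpa using hj⟩
    by_cases halg : IsAlgebraic L x
    · have hxL : x ∈ L := hD.mem_of_deriv_mem_of_isAlgebraic (hη.isDiffSubfield_adjoinSF hD hK)
        (fun y hy => le_adjoinSF K _ (hC y hy)) hx halg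
      exact ⟨t, η, hsel', hη, hind, by rw [hgen, adjoinSF_singleton_of_mem hxL]⟩
    · refine ⟨t + 1, Fin.snoc η x, fun i => ?_, isIterAntideriv_snoc_iff.2 ⟨hη, hx⟩,
        hind.fin_snoc ?_, by rw [hgen, Fin.range_snoc, adjoinSF_insert]⟩
      · cases i using Fin.lastCases with
        | last => exact ⟨Fin.last n, by simp⟩
        | cast i => simpa using hsel' i
      · rw [show L = _ from adjoinSF_eq_toSubfield_adjoin K _] at halg
        exact IntermediateField.transcendental_adjoin_iff.1 halg

end IterAntideriv

theorem statement0_general {N : Type*} [Field N] [CharZero N] (D : N → N) (hD : IsDeriv D)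
    (F K : Subfield N)
    (hK : IsDiffSubfield D K)
    (hNF : ∀ x : N, D x = 0 → x ∈ F)  -- N is a no new constants extension of F
    (hFK : F ≤ K)
    (n : ℕ) (ζ : Fin n → N)
    (hζ : IsIterAntideriv D F ζ) :
    IsIAE D K (adjoinSF K (Set.range ζ)) ∧
      (adjoinSF K (Set.range ζ) ≠ K →
        ∃ (t : ℕ) (η : Fin t → N), (∀ i, ∃ j, η i = ζ j) ∧
          IsIterAntideriv D K η ∧ AlgebraicIndependent K η ∧
          adjoinSF K (Set.range η) = adjoinSF K (Set.range ζ)) := by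
  have hCK : ∀ x, D x = 0 → x ∈ K := fun x hx => hFK (hNF x hx)
  have hζK : IsIterAntideriv D K ζ := hζ.mono hFK
  exact ⟨⟨⟨le_adjoinSF K _, fun x _ hx => hCK x hx⟩, n, ζ, hζK, rfl⟩,
    fun _ => hζK.exists_algebraicIndependent_subfamily hD hK hCK⟩

/-- Theorem: base change of an iterated antiderivative extension.
`N` is the ambient no new constants extension of `F`; `E = F(ζ₁,…,ζₙ)` is an
iterated antiderivative extension of `F`, `K ⊇ F` is a differential subfield of `N`.
Then `KE = K(ζ₁,…,ζₙ)` is an iterated antiderivative extension of `K`, and if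
`KE ≠ K` then some of the `ζᵢ`'s form a family of iterated antiderivatives of `K`,
algebraically independent over `K`, generating `KE` over `K`. -/
theorem statement0 {N : Type*} [Field N] [CharZero N] (D : N → N) (hD : IsDeriv D)
    (F E K : Subfield N)
    (hF : IsDiffSubfield D F) (hE : IsDiffSubfield D E) (hK : IsDiffSubfield D K)
    (hNF : ∀ x : N, D x = 0 → x ∈ F)  -- N is a no new constants extension of F
    (hFK : F ≤ K)
    (n : ℕ) (ζ : Fin n → N)
    (hζ : IsIterAntideriv D F ζ) (hEeq : E = adjoinSF F (Set.range ζ)) :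
    IsIAE D K (adjoinSF K (Set.range ζ)) ∧
      (adjoinSF K (Set.range ζ) ≠ K →
        ∃ (t : ℕ) (η : Fin t → N), (∀ i, ∃ j, η i = ζ j) ∧
          IsIterAntideriv D K η ∧ AlgebraicIndependent K η ∧
          adjoinSF K (Set.range η) = adjoinSF K (Set.range ζ)) :=
  statement0_general D hD F K hK hNF hFK n ζ hζ
end

section
/- Let F be a differential field of characteristic zero with field of constants C, and let E ⊇ F be a no new constants extension. Let ζ₁,…,ζₙ ∈ E be antiderivatives of F. Then either ζ₁,…,ζₙ are algebraically independent over F, or there exists a tuple (α₁,…,αₙ) ∈ Cⁿ ∖ {0} such that Σᵢ₌₁ⁿ αᵢζᵢ ∈ F. -/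
/-!
Take a nonzero polynomial relation `p(ζ) = 0` with coefficients in `F`, and let `δ` be the
derivation of `E[X]` extending `D` with `δ X_j = ζ_j'`. Then `(δ p)(ζ) = (p(ζ))' = 0`, `δ p` has
coefficients in `F` and no larger total degree, and its top-degree coefficients are the
derivatives of those of `p`. Normalising one top-degree coefficient of `p` to `1`, either
`δ p = 0` or `δ p` is a relation with smaller (total degree, number of top-degree monomials),
so some relation `q` satisfies `δ q = 0`. As `δ` commutes with the partial derivatives, these
bring `q` down to a polynomial `a₀ + ∑ aᵢ Xᵢ` with `δ`-derivative `0`: its coefficients `aᵢ` are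
constants, and so is `a₀ + ∑ aᵢ ζᵢ`, which therefore lies in `F`.
-/

open MvPolynomial

namespace MvPolynomial

variable {σ R : Type*} [CommSemiring R]

theorem exists_mem_support_degree_eq_totalDegree {p : MvPolynomial σ R} (hp : p ≠ 0) :
    ∃ m ∈ p.support, m.degree = p.totalDegree := by
  obtain ⟨m, hm, h⟩ := p.support.exists_mem_eq_sup (support_nonempty.mpr hp) Finsupp.degree
  exact ⟨m, hm, h.symm⟩

theorem degree_le_totalDegree {p : MvPolynomial σ R} {m : σ →₀ ℕ} (h : m ∈ p.support) :
    m.degree ≤ p.totalDegree :=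
  le_totalDegree h

theorem coeff_eq_zero_of_totalDegree_lt_degree {p : MvPolynomial σ R} {m : σ →₀ ℕ}
    (h : p.totalDegree < m.degree) : coeff m p = 0 :=
  coeff_eq_zero_of_totalDegree_lt h

theorem totalDegree_pderiv_le (i : σ) (p : MvPolynomial σ R) :
    (pderiv i p).totalDegree ≤ p.totalDegree - 1 := by
  refine Finset.sup_le fun m hm => ?_
  have hm' : m + Finsupp.single i 1 ∈ p.support := by
    rw [mem_support_iff, coeff_pderiv] at hm
    exact mem_support_iff.mpr (left_ne_zero_of_mul hm)
  have := degree_le_totalDegree hm'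
  simp only [map_add, Finsupp.degree_single] at this
  show m.degree ≤ _
  omega

theorem coeff_pderiv_eq_zero_of_totalDegree_le {p : MvPolynomial σ R} {m : σ →₀ ℕ}
    (h : p.totalDegree ≤ m.degree) (i : σ) : coeff m (pderiv i p) = 0 := by
  rw [coeff_pderiv, coeff_eq_zero_of_totalDegree_lt_degree, zero_mul]
  simpa using Nat.lt_succ_of_le h

theorem pderiv_comm (i j : σ) (p : MvPolynomial σ R) :
    pderiv i (pderiv j p) = pderiv j (pderiv i p) := by
  classical
  ext m
  simp only [coeff_pderiv, Finsupp.add_apply, Finsupp.single_apply, add_right_comm m]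
  by_cases hij : i = j
  · subst hij; rfl
  · simp only [hij, Ne.symm hij, if_false, add_zero]
    ring

theorem eval_eq_coeff_zero_add_sum_of_totalDegree_le_one [Fintype σ] {p : MvPolynomial σ R}
    (hp : p.totalDegree ≤ 1) (x : σ → R) :
    eval x p = coeff 0 p + ∑ i, coeff (Finsupp.single i 1) p * x i := by
  classical
  have hrepr : p = C (coeff 0 p) +
      ∑ i, monomial (Finsupp.single i 1) (coeff (Finsupp.single i 1) p) := by
    ext m
    simp only [coeff_add, coeff_C, coeff_sum, coeff_monomial]
    obtain h0 | h1 | h2 : m.degree = 0 ∨ m.degree = 1 ∨ 1 < m.degree := by omega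
    · obtain rfl := (Finsupp.degree_eq_zero_iff m).mp h0
      simp
    · obtain ⟨i, rfl⟩ : m ∈ Set.range (Finsupp.single · 1) := Finsupp.range_single_one ▸ h1
      have hi : (0 : σ →₀ ℕ) ≠ Finsupp.single i 1 :=
        (Finsupp.single_ne_zero.mpr one_ne_zero).symm
      simp [Finsupp.single_left_inj, hi]
    · have hne0 : m ≠ 0 := by rintro rfl; simp at h2
      have hne1 : ∀ i, Finsupp.single i 1 ≠ m := by rintro i rfl; simp at h2
      simp [coeff_eq_zero_of_totalDegree_lt_degree (hp.trans_lt h2), Ne.symm hne0, hne1]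
  calc eval x p = eval x (C (coeff 0 p) +
        ∑ i, monomial (Finsupp.single i 1) (coeff (Finsupp.single i 1) p)) := congrArg _ hrepr
    _ = _ := by simp [eval_monomial]

theorem exists_add_single_mem_support {p : MvPolynomial σ R} (hp : p.totalDegree ≠ 0) :
    ∃ (m : σ →₀ ℕ) (i : σ),
      m + Finsupp.single i 1 ∈ p.support ∧ m.degree + 1 = p.totalDegree := by
  obtain ⟨m, hm, hdeg⟩ :=
    exists_mem_support_degree_eq_totalDegree (p := p) (by rintro rfl; simp at hp)
  obtain ⟨i, hi⟩ : m.support.Nonempty := by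
    rw [Finsupp.support_nonempty_iff]
    rintro rfl
    simp [eq_comm, hp] at hdeg
  have hm' : m - Finsupp.single i 1 + Finsupp.single i 1 = m :=
    tsub_add_cancel_of_le (Finsupp.single_le_iff.mpr (Nat.one_le_iff_ne_zero.mpr
      (Finsupp.mem_support_iff.mp hi)))
  refine ⟨m - Finsupp.single i 1, i, hm'.symm ▸ hm, ?_⟩
  have := congrArg Finsupp.degree hm'
  rw [map_add, Finsupp.degree_single] at this
  omega

noncomputable def degreeProfile (p : MvPolynomial σ R) : ℕ ×ₗ ℕ :=
  toLex (p.totalDegree, (p.support.filter fun m => m.degree = p.totalDegree).card)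

theorem degreeProfile_smul {K : Type*} [Field K] {p : MvPolynomial σ K} {c : K} (hc : c ≠ 0) :
    degreeProfile (c • p) = degreeProfile p := by
  unfold degreeProfile totalDegree
  rw [support_smul_eq hc]

end MvPolynomial

namespace IsDeriv

variable {E : Type*} [Field E] {D : E → E}

theorem apply_zero (hD : IsDeriv D) : D 0 = 0 := by
  simpa using hD.1 0 0

theorem apply_one (hD : IsDeriv D) : D 1 = 0 := by
  simpa using hD.2 1 1

theorem apply_natCast (hD : IsDeriv D) (k : ℕ) : D k = 0 := by
  induction k with
  | zero => simpa using hD.apply_zero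
  | succ k ih => rw [Nat.cast_succ, hD.1, ih, hD.apply_one, add_zero]

theorem apply_mul_natCast (hD : IsDeriv D) (x : E) (k : ℕ) : D (x * k) = D x * k := by
  rw [hD.2, hD.apply_natCast, mul_zero, add_zero]

variable {σ : Type*}

noncomputable def mapCoeffs (hD : IsDeriv D) (p : MvPolynomial σ E) : MvPolynomial σ E :=
  AddMonoidAlgebra.ofCoeff (Finsupp.mapRange D hD.apply_zero (AddMonoidAlgebra.coeff p))

@[simp]
theorem coeff_mapCoeffs (hD : IsDeriv D) (p : MvPolynomial σ E) (m : σ →₀ ℕ) :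
    coeff m (hD.mapCoeffs p) = D (coeff m p) :=
  rfl

theorem mapCoeffs_add (hD : IsDeriv D) (p q : MvPolynomial σ E) :
    hD.mapCoeffs (p + q) = hD.mapCoeffs p + hD.mapCoeffs q := by
  ext m
  simp [hD.1]

theorem mapCoeffs_C (hD : IsDeriv D) (a : E) :
    hD.mapCoeffs (C a : MvPolynomial σ E) = C (D a) := by
  classical
  ext m
  simp only [coeff_mapCoeffs, coeff_C]
  split_ifs <;> simp [hD.apply_zero]

theorem mapCoeffs_mul_X (hD : IsDeriv D) (p : MvPolynomial σ E) (i : σ) :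
    hD.mapCoeffs (p * X i) = hD.mapCoeffs p * X i := by
  classical
  ext m
  simp only [coeff_mapCoeffs, coeff_mul_X']
  split_ifs <;> simp [hD.apply_zero]

theorem pderiv_mapCoeffs (hD : IsDeriv D) (i : σ) (p : MvPolynomial σ E) :
    pderiv i (hD.mapCoeffs p) = hD.mapCoeffs (pderiv i p) := by
  ext m
  simp only [coeff_pderiv, coeff_mapCoeffs, ← Nat.cast_succ, hD.apply_mul_natCast]

theorem coeff_pderiv_mem {F : Subfield E} {p : MvPolynomial σ E} (hp : ∀ m, coeff m p ∈ F)
    (i : σ) (m : σ →₀ ℕ) : coeff m (pderiv i p) ∈ F := by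
  rw [coeff_pderiv]
  exact F.mul_mem (hp _) (F.add_mem (natCast_mem F _) F.one_mem)

variable [Fintype σ]

/-- The derivation of `E[X_σ]` extending `D` with `X j ↦ D (ζ j)`. -/
noncomputable def polyDeriv (hD : IsDeriv D) (ζ : σ → E) (p : MvPolynomial σ E) :
    MvPolynomial σ E :=
  hD.mapCoeffs p + ∑ j, C (D (ζ j)) * pderiv j p

section

variable (hD : IsDeriv D) (ζ : σ → E)

theorem coeff_polyDeriv (p : MvPolynomial σ E) (m : σ →₀ ℕ) :
    coeff m (hD.polyDeriv ζ p) = D (coeff m p) + ∑ j, D (ζ j) * coeff m (pderiv j p) := by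
  simp [polyDeriv, coeff_sum, coeff_C_mul]

theorem polyDeriv_C (a : E) : hD.polyDeriv ζ (C a) = C (D a) := by
  simp [polyDeriv, mapCoeffs_C]

theorem polyDeriv_add (p q : MvPolynomial σ E) :
    hD.polyDeriv ζ (p + q) = hD.polyDeriv ζ p + hD.polyDeriv ζ q := by
  simp only [polyDeriv, mapCoeffs_add, map_add, mul_add, Finset.sum_add_distrib]
  ring

theorem polyDeriv_mul_X (p : MvPolynomial σ E) (i : σ) :
    hD.polyDeriv ζ (p * X i) = hD.polyDeriv ζ p * X i + C (D (ζ i)) * p := by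
  classical
  simp only [polyDeriv, mapCoeffs_mul_X, Derivation.leibniz, pderiv_X, Pi.single_apply,
    smul_eq_mul, mul_ite, mul_one, mul_zero, mul_add, Finset.sum_add_distrib, Finset.sum_ite_eq,
    Finset.mem_univ, ↓reduceIte, add_mul, Finset.sum_mul]
  simp only [mul_comm (X i), ← mul_assoc]
  ring

theorem eval_polyDeriv (p : MvPolynomial σ E) :
    eval ζ (hD.polyDeriv ζ p) = D (eval ζ p) := by
  induction p using MvPolynomial.induction_on with
  | C a => simp [polyDeriv_C]
  | add p q hp hq => rw [polyDeriv_add, map_add, map_add, hp, hq, hD.1]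
  | mul_X p i hp =>
    rw [polyDeriv_mul_X, map_add, map_mul, map_mul, map_mul, eval_X, eval_C, hp, hD.2]
    ring

theorem pderiv_polyDeriv (i : σ) (p : MvPolynomial σ E) :
    pderiv i (hD.polyDeriv ζ p) = hD.polyDeriv ζ (pderiv i p) := by
  simp only [polyDeriv, map_add, map_sum, pderiv_mapCoeffs, pderiv_C_mul, pderiv_comm i]

theorem coeff_polyDeriv_of_totalDegree_le {p : MvPolynomial σ E} {m : σ →₀ ℕ}
    (h : p.totalDegree ≤ m.degree) : coeff m (hD.polyDeriv ζ p) = D (coeff m p) := by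
  simp [coeff_polyDeriv, coeff_pderiv_eq_zero_of_totalDegree_le h]

theorem totalDegree_polyDeriv_le (p : MvPolynomial σ E) :
    (hD.polyDeriv ζ p).totalDegree ≤ p.totalDegree := by
  refine Finset.sup_le fun m hm => ?_
  show m.degree ≤ _
  by_contra! h
  rw [mem_support_iff, coeff_polyDeriv_of_totalDegree_le hD ζ h.le,
    coeff_eq_zero_of_totalDegree_lt_degree h, hD.apply_zero] at hm
  exact hm rfl

theorem coeff_polyDeriv_mem {F : Subfield E} (hF : IsDiffSubfield D F) (hζ : ∀ j, D (ζ j) ∈ F)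
    {p : MvPolynomial σ E} (hp : ∀ m, coeff m p ∈ F) (m : σ →₀ ℕ) :
    coeff m (hD.polyDeriv ζ p) ∈ F := by
  rw [coeff_polyDeriv]
  exact F.add_mem (hF _ (hp m)) (F.sum_mem fun j _ => F.mul_mem (hζ j) (coeff_pderiv_mem hp j m))

end

variable {F : Subfield E} {ζ : σ → E}

theorem exists_const_combination_mem_of_totalDegree_eq_one (hD : IsDeriv D)
    (hNNC : ∀ x : E, D x = 0 → x ∈ F) {p : MvPolynomial σ E} (hp : p.totalDegree = 1)
    (hpF : ∀ m, coeff m p ∈ F) (hQ : hD.polyDeriv ζ p = 0) :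
    ∃ α : σ → E, (∀ i, α i ∈ F ∧ D (α i) = 0) ∧ α ≠ 0 ∧ (∑ i, α i * ζ i) ∈ F := by
  refine ⟨fun i => coeff (Finsupp.single i 1) p, fun i => ⟨hpF _, ?_⟩, ?_, ?_⟩
  · rw [← coeff_polyDeriv_of_totalDegree_le hD ζ (by simp [hp]), hQ, coeff_zero]
  · obtain ⟨m, hm, hdeg⟩ := exists_mem_support_degree_eq_totalDegree (p := p)
      (by rintro rfl; simp at hp)
    obtain ⟨i, rfl⟩ : m ∈ Set.range (Finsupp.single · 1) :=
      Finsupp.range_single_one ▸ hdeg.trans hp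
    exact fun h => mem_support_iff.mp hm (congrFun h i)
  · have hev : eval ζ p ∈ F := hNNC _ (by rw [← eval_polyDeriv hD, hQ, map_zero])
    have hlin := eval_eq_coeff_zero_add_sum_of_totalDegree_le_one hp.le ζ
    rw [show ∑ i, coeff (Finsupp.single i 1) p * ζ i = eval ζ p - coeff 0 p by rw [hlin]; ring]
    exact F.sub_mem hev (hpF 0)

theorem exists_const_combination_mem_of_polyDeriv_eq_zero [CharZero E] (hD : IsDeriv D)
    (hNNC : ∀ x : E, D x = 0 → x ∈ F) {p : MvPolynomial σ E} (hp : p.totalDegree ≠ 0)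
    (hpF : ∀ m, coeff m p ∈ F) (hQ : hD.polyDeriv ζ p = 0) :
    ∃ α : σ → E, (∀ i, α i ∈ F ∧ D (α i) = 0) ∧ α ≠ 0 ∧ (∑ i, α i * ζ i) ∈ F := by
  induction hd : p.totalDegree using Nat.strong_induction_on generalizing p with
  | _ d ih =>
  obtain rfl | hd2 : d = 1 ∨ 2 ≤ d := by omega
  · exact hD.exists_const_combination_mem_of_totalDegree_eq_one hNNC hd hpF hQ
  obtain ⟨m, i, hm, hdeg⟩ := exists_add_single_mem_support hp
  have hcoeff : coeff m (pderiv i p) ≠ 0 := by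
    rw [coeff_pderiv]
    exact mul_ne_zero (mem_support_iff.mp hm) (by exact_mod_cast Nat.succ_ne_zero (m i))
  have hdeg' : (pderiv i p).totalDegree = d - 1 :=
    le_antisymm (hd ▸ totalDegree_pderiv_le i p)
      (by have := degree_le_totalDegree (mem_support_iff.mpr hcoeff); omega)
  exact ih (d - 1) (by omega) (by omega) (coeff_pderiv_mem hpF i)
    (by rw [← pderiv_polyDeriv, hQ, map_zero]) hdeg'

theorem degreeProfile_polyDeriv_lt (hD : IsDeriv D) {p : MvPolynomial σ E} {m : σ →₀ ℕ}
    (hm : coeff m p = 1) (hdeg : m.degree = p.totalDegree) :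
    degreeProfile (hD.polyDeriv ζ p) < degreeProfile p := by
  rw [degreeProfile, degreeProfile, Prod.Lex.toLex_lt_toLex]
  obtain hlt | heq := (totalDegree_polyDeriv_le hD ζ p).lt_or_eq
  · exact Or.inl hlt
  refine Or.inr ⟨heq, (Finset.card_le_card ?_).trans_lt (Finset.card_erase_lt_of_mem
    (Finset.mem_filter.mpr ⟨mem_support_iff.mpr (by simp [hm]), hdeg⟩))⟩
  intro m' hm'
  rw [Finset.mem_filter, mem_support_iff, heq] at hm'
  rw [coeff_polyDeriv_of_totalDegree_le hD ζ hm'.2.ge] at hm'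
  refine Finset.mem_erase.mpr ⟨?_, Finset.mem_filter.mpr ⟨mem_support_iff.mpr ?_, hm'.2⟩⟩
  · rintro rfl
    exact hm'.1 (by rw [hm, hD.apply_one])
  · exact fun h => hm'.1 (by rw [h, hD.apply_zero])

theorem exists_polyDeriv_eq_zero (hD : IsDeriv D) (hF : IsDiffSubfield D F)
    (hζ : ∀ j, D (ζ j) ∈ F) {p : MvPolynomial σ E} (hp : p ≠ 0) (hpF : ∀ m, coeff m p ∈ F)
    (hpζ : eval ζ p = 0) :
    ∃ q : MvPolynomial σ E,
      q ≠ 0 ∧ (∀ m, coeff m q ∈ F) ∧ eval ζ q = 0 ∧ hD.polyDeriv ζ q = 0 := by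
  induction hprof : degreeProfile p using WellFoundedLT.induction generalizing p with
  | ind x ih =>
  obtain ⟨m, hm, hdeg⟩ := exists_mem_support_degree_eq_totalDegree hp
  have hc : coeff m p ≠ 0 := mem_support_iff.mp hm
  set q := (coeff m p)⁻¹ • p with hq
  have hq0 : q ≠ 0 := smul_ne_zero (inv_ne_zero hc) hp
  have hqm : coeff m q = 1 := by simp [hq, hc]
  have hqdeg : q.totalDegree = p.totalDegree :=
    le_antisymm (totalDegree_smul_le _ _)
      (hdeg ▸ degree_le_totalDegree (mem_support_iff.mpr (by simp [hqm])))
  have hqF : ∀ m', coeff m' q ∈ F := fun m' => by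
    simpa [hq] using F.mul_mem (F.inv_mem (hpF m)) (hpF m')
  have hqζ : eval ζ q = 0 := by simp [hq, hpζ]
  by_cases hQ : hD.polyDeriv ζ q = 0
  · exact ⟨q, hq0, hqF, hqζ, hQ⟩
  have hlt : degreeProfile (hD.polyDeriv ζ q) < x :=
    hprof ▸ (degreeProfile_polyDeriv_lt hD hqm (hdeg.trans hqdeg.symm)).trans_eq
      (degreeProfile_smul (inv_ne_zero hc))
  exact ih _ hlt hQ (coeff_polyDeriv_mem hD ζ hF hζ hqF)
    (by rw [eval_polyDeriv, hqζ, hD.apply_zero]) rfl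

end IsDeriv

theorem Subfield.exists_eval_eq_zero_of_not_algebraicIndependent {E σ : Type*} [Field E]
    {F : Subfield E} {ζ : σ → E} (h : ¬AlgebraicIndependent F ζ) :
    ∃ p : MvPolynomial σ E, p ≠ 0 ∧ (∀ m, coeff m p ∈ F) ∧ eval ζ p = 0 := by
  rw [algebraicIndependent_iff] at h
  push Not at h
  obtain ⟨p, hpζ, hp⟩ := h
  refine ⟨p.map F.subtype, ?_, fun m => ?_, ?_⟩
  · exact fun h0 => hp (map_injective _ F.subtype_injective (by rw [h0, map_zero]))
  · rw [coeff_map]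
    exact (coeff m p).2
  · rw [eval_map]
    exact hpζ

/-- Ostrowski-type theorem: `E` (the ambient field) is a no new
constants extension of `F` and `ζ₁,…,ζₙ ∈ E` are antiderivatives of `F`. Then
either the `ζᵢ` are algebraically independent over `F`, or some nontrivial
`C`-linear combination of them lies in `F`, where `C` is the field of constants. -/
theorem statement6 {E : Type*} [Field E] [CharZero E] (D : E → E) (hD : IsDeriv D)
    (F : Subfield E) (hF : IsDiffSubfield D F)
    (hNNC : ∀ x : E, D x = 0 → x ∈ F)  -- E is a no new constants extension of F
    (n : ℕ) (ζ : Fin n → E) (hζ : ∀ i, D (ζ i) ∈ F) :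
    AlgebraicIndependent F ζ ∨
      ∃ α : Fin n → E, (∀ i, α i ∈ F ∧ D (α i) = 0) ∧ α ≠ 0 ∧
        (∑ i, α i * ζ i) ∈ F := by
  refine or_iff_not_imp_left.mpr fun hdep => ?_
  obtain ⟨p, hp, hpF, hpζ⟩ := Subfield.exists_eval_eq_zero_of_not_algebraicIndependent hdep
  obtain ⟨q, hq, hqF, hqζ, hQ⟩ := hD.exists_polyDeriv_eq_zero hF hζ hp hpF hpζ
  have hq_deg : q.totalDegree ≠ 0 := fun h => by
    rw [totalDegree_eq_zero_iff_eq_C.mp h, eval_C] at hqζ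
    exact hq (by rw [totalDegree_eq_zero_iff_eq_C.mp h, hqζ, C_0])
  exact hD.exists_const_combination_mem_of_polyDeriv_eq_zero hNNC hq_deg hqF hQ
end

section
/- Let F be a differential field of characteristic zero with field of constants C, and let E = F(ζ₁,…,ζ_t) be an antiderivative extension of F with ζ₁,…,ζ_t algebraically independent over F. An element ζ ∈ E is an antiderivative of F if and only if there exist constants α₁,…,α_t ∈ C and an element a ∈ F such that ζ = Σᵢ₌₁ᵗ αᵢζᵢ + a. -/
/-!
Let `x` be transcendental over a differential field `K` with `x′ ∈ K`, and let `δ` be the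
derivation of `K[X]` acting on coefficients and sending `X` to `x′`, so that
`(p(x))′ = (δ p)(x)`. If `u ∈ K(x)` and `u′ ∈ K`, the ideal of polynomials `q` with
`q(x) u ∈ K[x]` is `δ`-stable; its monic generator `q` divides `δ q`, which has smaller degree,
so `δ q = 0`, `q(x)` is a constant, hence lies in `K`, and `q = 1`: thus `u = p(x)`. Then `δ p`
is a constant polynomial; as `δ` commutes with `d/dX`, `δ (dp/dX) = 0`, so `dp/dX` is a constant
`c` with `c′ = 0`, i.e. `u = c x + a`. Peeling off the `ζᵢ` one at a time, each transcendental over the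
differential field generated over `F` by the others, whose constants are still those of `F`,
gives the theorem.
-/

open Polynomial Differential IntermediateField
open scoped Differential

def IsDeriv.toDerivation_s7 {E : Type*} [Field E] {D : E → E} (hD : IsDeriv D) :
    Derivation ℤ E E :=
  Derivation.mk' (AddMonoidHom.mk' D hD.1).toIntLinearMap fun a b => by
    simp [hD.2, mul_comm, add_comm]

abbrev Differential.restrict {L S : Type*} [CommRing L] [Differential L] [SetLike S L]
    [SubringClass S L] (K : S) (hK : ∀ a ∈ K, a′ ∈ K) : Differential K where
  deriv :=
    { toFun := fun a => ⟨(a : L)′, hK a a.2⟩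
      map_add' := fun a b => Subtype.ext (by simp)
      map_smul' := fun n a => Subtype.ext (by simp)
      map_one_eq_zero' := Subtype.ext (by simp)
      leibniz' := fun a b => Subtype.ext (by simp [Derivation.leibniz]) }

namespace Polynomial

def denominatorIdeal (R : Type*) {A : Type*} [CommRing R] [CommRing A] [Algebra R A]
    (x u : A) : Ideal R[X] where
  carrier := {q | ∃ p : R[X], aeval x q * u = aeval x p}
  add_mem' := by
    rintro a b ⟨p, hp⟩ ⟨p', hp'⟩
    exact ⟨p + p', by simp [add_mul, hp, hp']⟩
  zero_mem' := ⟨0, by simp⟩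
  smul_mem' := by
    rintro c q ⟨p, hp⟩
    exact ⟨c * p, by simp [mul_assoc, hp]⟩

lemma denominatorIdeal_ne_bot {K L : Type*} [Field K] [Field L] [Algebra K L] {x u : L}
    (hu : u ∈ K⟮x⟯) : denominatorIdeal K x u ≠ ⊥ := by
  obtain ⟨p, q, rfl⟩ := (mem_adjoin_simple_iff K u).1 hu
  rw [Submodule.ne_bot_iff]
  by_cases hqx : aeval x q = 0
  · exact ⟨1, ⟨0, by simp [hqx]⟩, one_ne_zero⟩
  · exact ⟨q, ⟨p, mul_div_cancel₀ _ hqx⟩, fun hq => hqx (by simp [hq])⟩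

theorem eq_C_add_C_mul_X_of_derivative_eq_C {R : Type*} [CommRing R] [IsAddTorsionFree R]
    {p : R[X]} {c : R} (h : derivative p = C c) : p = C (p.coeff 0) + C c * X := by
  have h0 : derivative (p - C c * X) = 0 := by simp [h]
  rw [derivative_eq_zero] at h0
  have hconst := eq_C_of_natDegree_eq_zero h0
  simp only [coeff_sub, coeff_C_mul, coeff_X_zero, mul_zero, sub_zero] at hconst
  rw [← hconst]
  ring

end Polynomial

namespace Differential

section OneVariable

variable {K L : Type*} [Field K] [Field L] [Algebra K L] [Differential K] [Differential L]
  [DifferentialAlgebra K L]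

lemma derivative_mapCoeffs (p : K[X]) : derivative (mapCoeffs p) = mapCoeffs (derivative p) := by
  ext n
  simp [coeff_derivative, Derivation.leibniz, mul_comm]

lemma implicitDeriv_C_apply (f : K) (p : K[X]) :
    implicitDeriv (C f) p = mapCoeffs p + f • derivative p := by
  simp [implicitDeriv, smul_eq_C_mul]

lemma derivative_implicitDeriv_C (f : K) (p : K[X]) :
    derivative (implicitDeriv (C f) p) = implicitDeriv (C f) (derivative p) := by
  simp [implicitDeriv_C_apply, derivative_mapCoeffs]

lemma degree_implicitDeriv_C_lt {q : K[X]} (hq : q.Monic) (f : K) :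
    (implicitDeriv (C f) q).degree < q.degree := by
  rw [implicitDeriv_C_apply]
  refine (degree_add_le _ _).trans_lt (max_lt ?_ ?_)
  · rw [degree_eq_natDegree hq.ne_zero, degree_lt_iff_coeff_zero]
    intro m hm
    rcases hm.eq_or_lt with rfl | hm
    · simp [hq.coeff_natDegree]
    · simp [coeff_eq_zero_of_natDegree_lt hm]
  · exact (degree_smul_le _ _).trans_lt (degree_derivative_lt hq.ne_zero)

lemma deriv_aeval_eq_aeval_implicitDeriv_C {x : L} {f : K} (hf : x′ = algebraMap K L f)
    (p : K[X]) : (aeval x p)′ = aeval x (implicitDeriv (C f) p) :=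
  deriv_aeval_eq_implicitDeriv x (C f) (by simpa using hf) p

lemma implicitDeriv_C_mem_denominatorIdeal {x u : L} {f w : K} (hf : x′ = algebraMap K L f)
    (hu : u′ = algebraMap K L w) {q : K[X]} (hq : q ∈ denominatorIdeal K x u) :
    implicitDeriv (C f) q ∈ denominatorIdeal K x u := by
  obtain ⟨p, hp⟩ := hq
  refine ⟨implicitDeriv (C f) p - C w * q, ?_⟩
  have hp' := congrArg (·′) hp
  simp only [Derivation.leibniz, smul_eq_mul, deriv_aeval_eq_aeval_implicitDeriv_C hf, hu] at hp'
  rw [map_sub, map_mul, aeval_C, ← hp']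
  ring

variable [ContainConstants K L] {x : L} {f : K}

lemma exists_eq_C_of_implicitDeriv_C_eq_zero (hx : Transcendental K x)
    (hf : x′ = algebraMap K L f) {p : K[X]} (hp : implicitDeriv (C f) p = 0) : ∃ c, p = C c := by
  obtain ⟨c, hc⟩ := mem_range_of_deriv_eq_zero K (x := aeval x p)
    (by rw [deriv_aeval_eq_aeval_implicitDeriv_C hf, hp, map_zero])
  exact ⟨c, transcendental_iff_injective.1 hx (by simpa using hc.symm)⟩

theorem exists_eq_aeval_of_deriv_eq_algebraMap (hx : Transcendental K x)
    (hf : x′ = algebraMap K L f) {u : L} {w : K} (hu : u ∈ K⟮x⟯) (hu' : u′ = algebraMap K L w) :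
    ∃ p : K[X], u = aeval x p := by
  classical
  set I := denominatorIdeal K x u
  obtain ⟨g, hg⟩ := (IsPrincipalIdealRing.principal I).principal
  have hg0 : g ≠ 0 := by
    rintro rfl
    exact denominatorIdeal_ne_bot hu (by simpa using hg)
  set q := normalize g
  have hI : I = Ideal.span {q} :=
    hg.trans (Ideal.span_singleton_eq_span_singleton.2 (normalize_associated g).symm)
  have hq : q.Monic := monic_normalize hg0
  have hqI : q ∈ I := hI ▸ Ideal.mem_span_singleton_self q
  have hdvd : q ∣ implicitDeriv (C f) q :=
    Ideal.mem_span_singleton.1 (hI ▸ implicitDeriv_C_mem_denominatorIdeal hf hu' hqI)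
  obtain ⟨c, hc⟩ := exists_eq_C_of_implicitDeriv_C_eq_zero hx hf
    (eq_zero_of_dvd_of_degree_lt hdvd (degree_implicitDeriv_C_lt hq f))
  have hq1 : q = 1 := by
    rw [hc, Monic, leadingCoeff_C] at hq
    rw [hc, hq, C_1]
  obtain ⟨p, hp⟩ := hq1 ▸ hqI
  exact ⟨p, by simpa using hp⟩

theorem exists_aeval_eq_mul_add_of_deriv_aeval_eq [CharZero K] (hx : Transcendental K x)
    (hf : x′ = algebraMap K L f) {p : K[X]} {w : K} (hp : (aeval x p)′ = algebraMap K L w) :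
    ∃ c a : K, c′ = 0 ∧ aeval x p = algebraMap K L c * x + algebraMap K L a := by
  have hδp : implicitDeriv (C f) p = C w := transcendental_iff_injective.1 hx
    (by rw [← deriv_aeval_eq_aeval_implicitDeriv_C hf, hp, aeval_C])
  have hδp' : implicitDeriv (C f) (derivative p) = 0 := by
    rw [← derivative_implicitDeriv_C, hδp, derivative_C]
  obtain ⟨c, hc⟩ := exists_eq_C_of_implicitDeriv_C_eq_zero hx hf hδp'
  refine ⟨c, p.coeff 0, ?_, ?_⟩
  · rwa [hc, implicitDeriv_C, C_eq_zero] at hδp'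
  · conv_lhs => rw [eq_C_add_C_mul_X_of_derivative_eq_C hc]
    simp only [map_add, map_mul, aeval_C, aeval_X]
    ring

theorem exists_eq_mul_add_of_deriv_mem [CharZero K] (hx : Transcendental K x)
    (hx' : x′ ∈ (algebraMap K L).range) {u : L} (hu : u ∈ K⟮x⟯)
    (hu' : u′ ∈ (algebraMap K L).range) :
    ∃ c a : K, c′ = 0 ∧ u = algebraMap K L c * x + algebraMap K L a := by
  obtain ⟨f, hf⟩ := hx'
  obtain ⟨w, hw⟩ := hu'
  obtain ⟨p, rfl⟩ := exists_eq_aeval_of_deriv_eq_algebraMap hx hf.symm hu hw.symm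
  exact exists_aeval_eq_mul_add_of_deriv_aeval_eq hx hf.symm hw.symm

end OneVariable

section Tower

variable {F E : Type*} [Field F] [Field E] [Algebra F E] [Differential F] [Differential E]
  [DifferentialAlgebra F E]

lemma deriv_mem_adjoin {S : Set E} (hS : ∀ s ∈ S, s′ ∈ (algebraMap F E).range) {y : E}
    (hy : y ∈ adjoin F S) : y′ ∈ adjoin F S := by
  induction hy using IntermediateField.adjoin_induction with
  | mem s hs =>
    obtain ⟨a, ha⟩ := hS s hs
    exact ha ▸ IntermediateField.algebraMap_mem _ a
  | algebraMap a =>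
    exact (deriv_algebraMap (B := E) a).symm ▸ IntermediateField.algebraMap_mem _ _
  | add y z hy hz ihy ihz =>
    rw [map_add]
    exact add_mem ihy ihz
  | inv y hy ih =>
    rw [Derivation.leibniz_inv, smul_eq_mul]
    exact mul_mem (neg_mem (pow_mem (inv_mem hy) 2)) ih
  | mul y z hy hz ihy ihz =>
    rw [Derivation.leibniz, smul_eq_mul, smul_eq_mul]
    exact add_mem (mul_mem hy ihz) (mul_mem hz ihy)

theorem exists_eq_mul_add_of_deriv_mem_of_tower [CharZero F]
    [ContainConstants F E] {K : IntermediateField F E} (hK : ∀ y ∈ K, y′ ∈ K) {x : E}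
    (hx : Transcendental K x) (hx' : x′ ∈ (algebraMap F E).range) {u : E} (hu : u ∈ K⟮x⟯)
    (hu' : u′ ∈ (algebraMap F E).range) :
    ∃ c : F, c′ = 0 ∧ ∃ v ∈ K, v′ ∈ (algebraMap F E).range ∧ u = algebraMap F E c * x + v := by
  let _ : Differential K := restrict K hK
  have _ : DifferentialAlgebra K E := ⟨fun _ => rfl⟩
  have _ : ContainConstants K E := ⟨fun h => by
    obtain ⟨a, ha⟩ := mem_range_of_deriv_eq_zero F h
    exact ⟨algebraMap F K a, ha⟩⟩
  have _ : CharZero K := charZero_of_injective_algebraMap (algebraMap F K).injective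
  obtain ⟨f, hf⟩ := hx'
  obtain ⟨w, hw⟩ := hu'
  obtain ⟨c, v, hc, rfl⟩ :=
    exists_eq_mul_add_of_deriv_mem hx ⟨algebraMap F K f, hf⟩ hu ⟨algebraMap F K w, hw⟩
  have hcE : (algebraMap K E c)′ = 0 := by rw [deriv_algebraMap, hc, map_zero]
  obtain ⟨c₀, hc₀⟩ := mem_range_of_deriv_eq_zero F hcE
  have hc₀' : c₀′ = 0 :=
    (algebraMap F E).injective (by rw [← deriv_algebraMap, hc₀, hcE, map_zero])
  rw [← hc₀] at hw ⊢
  refine ⟨c₀, hc₀', v, v.2, ⟨w - c₀ * f, ?_⟩, rfl⟩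
  change _ = ((algebraMap K E v)′)
  rw [map_sub, map_mul, hw, hf, map_add, Derivation.leibniz, deriv_algebraMap, hc₀', map_zero,
    smul_eq_mul, smul_eq_mul]
  ring

theorem exists_eq_sum_mul_add_of_deriv_mem [CharZero F] [ContainConstants F E] {ι : Type*}
    {ζ : ι → E} (hind : AlgebraicIndependent F ζ) (hζ : ∀ i, (ζ i)′ ∈ (algebraMap F E).range)
    (s : Finset ι) {u : E} (hu : u ∈ adjoin F (ζ '' s)) (hu' : u′ ∈ (algebraMap F E).range) :
    ∃ α : ι → F, (∀ i, (α i)′ = 0) ∧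
      ∃ a : F, u = ∑ i ∈ s, algebraMap F E (α i) * ζ i + algebraMap F E a := by
  classical
  induction s using Finset.induction_on generalizing u with
  | empty =>
    obtain ⟨a, rfl⟩ := mem_bot.1 (by simpa using hu)
    exact ⟨0, fun _ => map_zero _, a, by simp⟩
  | insert i s hi ih =>
    have huK : u ∈ (adjoin F (ζ '' s))⟮ζ i⟯ := by
      rw [← mem_restrictScalars F, adjoin_adjoin_left, Set.union_singleton, ← Set.image_insert_eq,
        ← Finset.coe_insert]
      exact hu
    obtain ⟨c, hc, v, hvK, hv', rfl⟩ := exists_eq_mul_add_of_deriv_mem_of_tower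
      (fun _ => deriv_mem_adjoin (by rintro _ ⟨j, -, rfl⟩; exact hζ j))
      (transcendental_adjoin_iff.2 (hind.transcendental_adjoin (s := ↑s) hi)) (hζ i) huK hu'
    obtain ⟨β, hβ, a, rfl⟩ := ih hvK hv'
    have hsum : ∑ j ∈ s, algebraMap F E (Function.update β i c j) * ζ j =
        ∑ j ∈ s, algebraMap F E (β j) * ζ j :=
      Finset.sum_congr rfl fun j hj => by rw [Function.update_of_ne (ne_of_mem_of_not_mem hj hi)]
    refine ⟨Function.update β i c, fun j => ?_, a, ?_⟩
    · rw [Function.update_apply]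
      split_ifs
      exacts [hc, hβ j]
    · rw [Finset.sum_insert hi, Function.update_self, hsum, add_assoc]

end Tower

end Differential

/-- `E = F(ζ₁,…,ζ_t)` (the ambient field, `⊤`) is an antiderivative
extension of `F` with `ζ₁,…,ζ_t` algebraically independent over `F`. An element
`u ∈ E` is an antiderivative of `F` iff `u = Σ αᵢζᵢ + a` with the `αᵢ` constants
and `a ∈ F`. -/
theorem statement7 {E : Type*} [Field E] [CharZero E] (D : E → E) (hD : IsDeriv D)
    (F : Subfield E) (hF : IsDiffSubfield D F)
    (hNNC : ∀ x : E, D x = 0 → x ∈ F)  -- E is a no new constants extension of F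
    (t : ℕ) (ζ : Fin t → E) (hζ : ∀ i, D (ζ i) ∈ F)
    (hind : AlgebraicIndependent F ζ)
    (htop : adjoinSF F (Set.range ζ) = ⊤)
    (u : E) :
    D u ∈ F ↔
      ∃ α : Fin t → E, (∀ i, α i ∈ F ∧ D (α i) = 0) ∧
        ∃ a ∈ F, u = (∑ i, α i * ζ i) + a := by
  let _ : Differential E := ⟨hD.toDerivation_s7⟩
  let _ : Differential F := Differential.restrict F hF
  have _ : DifferentialAlgebra F E := ⟨fun _ => rfl⟩
  have _ : ContainConstants F E := ⟨fun h => ⟨⟨_, hNNC _ h⟩, rfl⟩⟩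
  constructor
  · intro hu'
    have hu : u ∈ adjoin F (ζ '' ↑(Finset.univ : Finset (Fin t))) := by
      have hrange : Set.range (algebraMap F E) = F := Subtype.range_coe
      rw [Finset.coe_univ, Set.image_univ, ← mem_toSubfield, adjoin_toSubfield, hrange]
      exact (htop ▸ Subfield.mem_top u : u ∈ adjoinSF F (Set.range ζ))
    obtain ⟨α, hα, a, rfl⟩ := exists_eq_sum_mul_add_of_deriv_mem hind
      (fun i => ⟨⟨_, hζ i⟩, rfl⟩) _ hu ⟨⟨_, hu'⟩, rfl⟩
    exact ⟨fun i => α i, fun i => ⟨(α i).2, congrArg Subtype.val (hα i)⟩, a, a.2, rfl⟩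
  · rintro ⟨α, hα, a, ha, rfl⟩
    change hD.toDerivation_s7 _ ∈ F
    rw [map_add, map_sum]
    refine add_mem (sum_mem fun i _ => ?_) (hF a ha)
    have hαi : hD.toDerivation_s7 (α i) = 0 := (hα i).2
    rw [Derivation.leibniz, hαi, smul_zero, add_zero, smul_eq_mul]
    exact mul_mem (hα i).1 (hζ i)
end

section
/- Let F be a differential field of characteristic zero and let E be an iterated antiderivative extension of F with normal tower E = E_m ⊃ E_{m−1} ⊃ ⋯ ⊃ E₁ ⊃ E₀ = F. Then every σ ∈ G(E|F) maps each Eᵢ into itself: σ(Eᵢ) ⊆ Eᵢ for all i. -/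
/- A differential automorphism sends antiderivatives of a subfield `L` it stabilises to
antiderivatives of `L`, so it stabilises the antiderivative closure of `L` as well; induction
along the normal tower finishes the proof. -/

theorem le_adCl {E : Type*} [Field E] (D : E → E) (L : Subfield E) : L ≤ adCl D L :=
  fun _ hy => Subfield.subset_closure (Or.inl hy)

theorem adCl_le_comap_of_le_comap {E : Type*} [Field E] {D : E → E} {L : Subfield E}
    {σ : E →+* E} (hσD : ∀ y, σ (D y) = D (σ y)) (hL : L ≤ L.comap σ) :
    adCl D L ≤ (adCl D L).comap σ := by
  refine Subfield.closure_le.mpr ?_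
  rintro y (hy | hy)
  · exact le_adCl D L (hL hy)
  · have hσy : D (σ y) ∈ L := hσD y ▸ hL hy
    exact Subfield.subset_closure (Or.inr hσy)

theorem iterate_adCl_le_comap_of_le_comap {E : Type*} [Field E] {D : E → E} {L : Subfield E}
    {σ : E →+* E} (hσD : ∀ y, σ (D y) = D (σ y)) (hL : L ≤ L.comap σ) (i : ℕ) :
    (adCl D)^[i] L ≤ ((adCl D)^[i] L).comap σ := by
  induction i with
  | zero => exact hL
  | succ n ih =>
    rw [Function.iterate_succ_apply']
    exact adCl_le_comap_of_le_comap hσD ih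

theorem statement11_general {E : Type*} [Field E] (D : E → E)
    (F : Subfield E)
    (σ : E ≃+* E) (hσ : IsDiffAut D F σ) :
    ∀ i : ℕ, ∀ x ∈ (adCl D)^[i] F, σ x ∈ (adCl D)^[i] F := by
  have hF : F ≤ F.comap (σ : E →+* E) := fun x hx => by
    rw [Subfield.mem_comap, RingHom.coe_coe, hσ.1 x hx]
    exact hx
  exact iterate_adCl_le_comap_of_le_comap hσ.2 hF

/-- let `E` (the ambient field, `⊤`) be an iterated antiderivative
extension of `F`, with normal tower `Eᵢ = adCl^[i] F` (iterated antiderivative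
closures). Then every differential automorphism of `E` over `F` maps each `Eᵢ`
into itself. -/
theorem statement11 {E : Type*} [Field E] [CharZero E] (D : E → E) (hD : IsDeriv D)
    (F : Subfield E) (hF : IsDiffSubfield D F)
    (hIAE : IsIAE D F ⊤)
    (σ : E ≃+* E) (hσ : IsDiffAut D F σ) :
    ∀ i : ℕ, ∀ x ∈ (adCl D)^[i] F, σ x ∈ (adCl D)^[i] F :=
  statement11_general D F σ hσ
end
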